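/- arXiv:1712.02452 — 5 statements merged into one kernel-verified Lean document; each statement's English description precedes it below -/
import Mathlib

section
/- Let n ≥ 2 and let C be a relative interaction matrix. Say that node i belongs to a sink of G(C) if for every node j reachable from i (i.e., (C^k)_{ij} > 0 for some k ≥ 1), node i is also reachable from j. Then every fixed point x ∈ Δⁿ \ {e_1, …, e_n} of the single-timescale DeGroot–Friedkin map F satisfies x_i = 0 for every node i that does not belong to a sink of G(C). -/
/-- The simplex Δⁿ = {x ∈ ℝⁿ : xᵢ ≥ 0, ∑ᵢ xᵢ = 1}. -/
def simplex (n : ℕ) : Set (Fin n → ℝ) :=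
  {x | (∀ i, 0 ≤ x i) ∧ ∑ i, x i = 1}

/-- The i-th vertex (standard basis vector) of the simplex. -/
def vertex (n : ℕ) (i : Fin n) : Fin n → ℝ := fun j => if j = i then 1 else 0

/-- A relative interaction matrix: nonnegative, row-stochastic, zero diagonal. -/
def IsRIM {n : ℕ} (C : Matrix (Fin n) (Fin n) ℝ) : Prop :=
  (∀ i j, 0 ≤ C i j) ∧ (∀ i, ∑ j, C i j = 1) ∧ (∀ i, C i i = 0)

/-- The single-timescale DeGroot–Friedkin map F(x) = Cᵀ(x − x²) + x². -/
noncomputable def DF {n : ℕ} (C : Matrix (Fin n) (Fin n) ℝ) (x : Fin n → ℝ) : Fin n → ℝ :=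
  fun i => ∑ j, C j i * (x j - (x j) ^ 2) + (x i) ^ 2

/-- Node j is reachable from node i in G(C): (C^k)_{ij} > 0 for some k ≥ 1. -/
def Reaches {n : ℕ} (C : Matrix (Fin n) (Fin n) ℝ) (i j : Fin n) : Prop :=
  ∃ k, 1 ≤ k ∧ 0 < (C ^ k) i j

/-- Node i belongs to a sink of G(C): every node reachable from i also reaches i. -/
def BelongsToSink {n : ℕ} (C : Matrix (Fin n) (Fin n) ℝ) (i : Fin n) : Prop :=
  ∀ j, Reaches C i j → Reaches C j i

lemma pow_entry_nonneg {n : ℕ} {C : Matrix (Fin n) (Fin n) ℝ}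
    (hCnn : ∀ i j, 0 ≤ C i j) : ∀ (k : ℕ) (i j : Fin n), 0 ≤ (C ^ k) i j := by
  intro k
  induction k with
  | zero =>
    intro i j
    simp only [pow_zero, Matrix.one_apply]
    split <;> norm_num
  | succ k ih =>
    intro i j
    rw [pow_succ, Matrix.mul_apply]
    exact Finset.sum_nonneg fun m _ => mul_nonneg (ih i m) (hCnn m j)

lemma reaches_trans {n : ℕ} {C : Matrix (Fin n) (Fin n) ℝ}
    (hCnn : ∀ i j, 0 ≤ C i j) {i j k : Fin n}
    (h1 : Reaches C i j) (h2 : Reaches C j k) : Reaches C i k := by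
  obtain ⟨a, ha1, ha⟩ := h1
  obtain ⟨b, hb1, hb⟩ := h2
  refine ⟨a + b, le_trans ha1 (Nat.le_add_right a b), ?_⟩
  rw [pow_add, Matrix.mul_apply]
  have hterm : 0 < (C ^ a) i j * (C ^ b) j k := mul_pos ha hb
  have hle : (C ^ a) i j * (C ^ b) j k ≤ ∑ m, (C ^ a) i m * (C ^ b) m k :=
    Finset.single_le_sum
      (fun m _ => mul_nonneg (pow_entry_nonneg hCnn a i m) (pow_entry_nonneg hCnn b m k))
      (Finset.mem_univ j)
  linarith

theorem stmt14 {n : ℕ} (hn : 2 ≤ n) (C : Matrix (Fin n) (Fin n) ℝ) (hC : IsRIM C)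
    (x : Fin n → ℝ) (hx : x ∈ simplex n) (hxv : ∀ i, x ≠ vertex n i)
    (hfix : DF C x = x) :
    ∀ i, ¬ BelongsToSink C i → x i = 0 := by
  classical
  obtain ⟨hCnn, hCrow, hCdiag⟩ := hC
  obtain ⟨hxnn, hxsum⟩ := hx
  set y : Fin n → ℝ := fun j => x j - x j ^ 2 with hy
  have hxle : ∀ i, x i ≤ 1 := by
    intro i
    have := Finset.single_le_sum (fun j (_ : j ∈ Finset.univ) => hxnn j) (Finset.mem_univ i)
    linarith [hxsum ▸ this]
  have hxlt : ∀ i, x i < 1 := by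
    intro i
    refine (hxle i).lt_of_ne ?_
    intro h1
    apply hxv i
    have hrest : ∑ j ∈ Finset.univ.erase i, x j = 0 := by
      have := Finset.add_sum_erase Finset.univ x (Finset.mem_univ i)
      rw [hxsum, h1] at this
      linarith
    have hzero : ∀ j ∈ Finset.univ.erase i, x j = 0 :=
      (Finset.sum_eq_zero_iff_of_nonneg (fun j _ => hxnn j)).mp hrest
    funext j
    by_cases hj : j = i
    · simp [vertex, hj, h1]
    · simp only [vertex, if_neg hj]
      exact hzero j (Finset.mem_erase.mpr ⟨hj, Finset.mem_univ j⟩)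
  have hynn : ∀ i, 0 ≤ y i := by
    intro i
    simp only [hy]
    nlinarith [hxnn i, hxle i]
  have hfix' : ∀ i, ∑ j, C j i * y j = y i := by
    intro i
    have h := congrFun hfix i
    simp only [DF] at h
    simp only [hy]
    linarith
  -- support closedness: if y a > 0 and C a b > 0 then y b > 0
  have hSclosed : ∀ a b : Fin n, 0 < y a → 0 < C a b → 0 < y b := by
    intro a b hya hab
    by_contra hyb
    have hyb0 : y b = 0 := le_antisymm (not_lt.mp hyb) (hynn b)
    have hsum0 : ∑ j, C j b * y j = 0 := by rw [hfix' b, hyb0]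
    have hall := (Finset.sum_eq_zero_iff_of_nonneg
      (fun j (_ : j ∈ Finset.univ) => mul_nonneg (hCnn j b) (hynn j))).mp hsum0 a
      (Finset.mem_univ a)
    nlinarith
  intro i hsink
  by_contra hne
  have hxi : 0 < x i := (hxnn i).lt_of_ne (Ne.symm hne)
  have hyi : 0 < y i := by
    simp only [hy]
    nlinarith [hxlt i]
  -- the bad set T of nodes that do not reach i
  set T : Finset (Fin n) := Finset.univ.filter (fun k => ¬ Reaches C k i) with hT
  have hTclosed : ∀ a ∈ T, ∀ b, b ∉ T → C a b = 0 := by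
    intro a ha b hb
    by_contra hab
    have hab' : 0 < C a b := (hCnn a b).lt_of_ne (Ne.symm hab)
    have hbR : Reaches C b i := by
      by_contra hbR
      exact hb (Finset.mem_filter.mpr ⟨Finset.mem_univ b, hbR⟩)
    have haR : Reaches C a i :=
      reaches_trans hCnn ⟨1, le_refl 1, by rwa [pow_one]⟩ hbR
    exact (Finset.mem_filter.mp ha).2 haR
  -- row sums restricted to T equal 1 for rows in T
  have hrowT : ∀ a ∈ T, ∑ k ∈ T, C a k = 1 := by
    intro a ha
    rw [← hCrow a]
    exact Finset.sum_subset (Finset.subset_univ T)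
      (fun k _ hk => hTclosed a ha k hk)
  -- forced condition: a support node outside T has no edge into T
  have hforced : ∀ m, m ∉ T → 0 < y m → ∀ c ∈ T, C m c = 0 := by
    have h2 : ∑ k ∈ T, y k = ∑ j, y j * ∑ k ∈ T, C j k := by
      calc ∑ k ∈ T, y k = ∑ k ∈ T, ∑ j, C j k * y j := by
            refine Finset.sum_congr rfl ?_
            intro k _
            rw [hfix' k]
        _ = ∑ j, ∑ k ∈ T, C j k * y j := Finset.sum_comm
        _ = ∑ j, y j * ∑ k ∈ T, C j k := by
            refine Finset.sum_congr rfl ?_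
            intro j _
            rw [Finset.mul_sum]
            exact Finset.sum_congr rfl fun k _ => mul_comm _ _
    have hsplit : ∑ j, y j * ∑ k ∈ T, C j k
        = ∑ j ∈ T, y j * ∑ k ∈ T, C j k + ∑ j ∈ Finset.univ \ T, y j * ∑ k ∈ T, C j k := by
      rw [← Finset.sum_sdiff (Finset.subset_univ T)]
      ring
    have hTpart : ∑ j ∈ T, y j * ∑ k ∈ T, C j k = ∑ j ∈ T, y j := by
      refine Finset.sum_congr rfl ?_
      intro j hj
      rw [hrowT j hj, mul_one]
    have hzero : ∑ j ∈ Finset.univ \ T, y j * ∑ k ∈ T, C j k = 0 := by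
      have := h2
      rw [hsplit, hTpart] at this
      linarith
    have hterms := (Finset.sum_eq_zero_iff_of_nonneg
      (fun j (_ : j ∈ Finset.univ \ T) =>
        mul_nonneg (hynn j) (Finset.sum_nonneg fun k _ => hCnn j k))).mp hzero
    intro m hm hym c hc
    have hmem : m ∈ Finset.univ \ T := Finset.mem_sdiff.mpr ⟨Finset.mem_univ m, hm⟩
    have h0 := hterms m hmem
    have hrow0 : ∑ k ∈ T, C m k = 0 := by
      rcases mul_eq_zero.mp h0 with h | h
      · exact absurd h (ne_of_gt hym)
      · exact h
    exact (Finset.sum_eq_zero_iff_of_nonneg (fun k _ => hCnn m k)).mp hrow0 c hc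
  -- no walk can lead from a positive node outside T into T
  have hB : ∀ (k : ℕ) (a : Fin n), 0 < y a → a ∉ T → ∀ b ∈ T, 0 < (C ^ k) a b → False := by
    intro k
    induction k with
    | zero =>
      intro a hya haT b hbT hpos
      rw [pow_zero, Matrix.one_apply] at hpos
      by_cases hab : a = b
      · exact haT (hab ▸ hbT)
      · rw [if_neg hab] at hpos; exact lt_irrefl 0 hpos
    | succ k ih =>
      intro a hya haT b hbT hpos
      rw [pow_succ', Matrix.mul_apply] at hpos
      obtain ⟨c, hc⟩ : ∃ c, 0 < C a c * (C ^ k) c b := by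
        by_contra h
        push_neg at h
        have : ∑ m, C a m * (C ^ k) m b ≤ 0 := Finset.sum_nonpos fun m _ => h m
        linarith
      have hCac : 0 < C a c := by
        rcases mul_pos_iff.mp hc with ⟨h1, _⟩ | ⟨h1, _⟩
        · exact h1
        · exact absurd h1 (not_lt.mpr (hCnn a c))
      have hpow : 0 < (C ^ k) c b := by
        rcases mul_pos_iff.mp hc with ⟨_, h2⟩ | ⟨_, h2⟩
        · exact h2
        · exact absurd h2 (not_lt.mpr (pow_entry_nonneg hCnn k c b))
      have hcT : c ∉ T := by
        intro hcT
        exact absurd (hforced a haT hya c hcT) (ne_of_gt hCac)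
      exact ih c (hSclosed a c hya hCac) hcT b hbT hpow
  -- extract the witness of non-sinkness
  simp only [BelongsToSink, not_forall] at hsink
  obtain ⟨j0, hij0, hnr⟩ := hsink
  have hj0T : j0 ∈ T := Finset.mem_filter.mpr ⟨Finset.mem_univ j0, hnr⟩
  -- find a positive in-neighbor of i
  have hpos : 0 < ∑ j, C j i * y j := by rw [hfix']; exact hyi
  obtain ⟨m, hm⟩ : ∃ m, 0 < C m i * y m := by
    by_contra h
    push_neg at h
    have : ∑ j, C j i * y j ≤ 0 := Finset.sum_nonpos fun j _ => h j
    linarith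
  have hCmi : 0 < C m i := by
    rcases mul_pos_iff.mp hm with ⟨h1, _⟩ | ⟨h1, _⟩
    · exact h1
    · exact absurd h1 (not_lt.mpr (hCnn m i))
  have hym : 0 < y m := by
    rcases mul_pos_iff.mp hm with ⟨_, h2⟩ | ⟨_, h2⟩
    · exact h2
    · exact absurd h2 (not_lt.mpr (hynn m))
  have hmR : Reaches C m i := ⟨1, le_refl 1, by rwa [pow_one]⟩
  have hmT : m ∉ T := by
    intro hmT
    exact (Finset.mem_filter.mp hmT).2 hmR
  obtain ⟨k, _, hk⟩ := reaches_trans hCnn hmR hij0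
  exact hB k m hym hmT j0 hj0T hk
end

section
/- Let n ≥ 3 and let C be a relative interaction matrix such that two distinct nodes i and j form a two-node sink: C_{ij} = C_{ji} = 1 (hence C_{ik} = C_{jk} = 0 for every k ∉ {i, j}). Then every fixed point x* ∈ Δⁿ \ {e_1, …, e_n} of F with ζ := x*_i + x*_j < 1 satisfies x*_i = x*_j = ζ/2; moreover, every point x ∈ Δⁿ with x_i = α, x_j = 1 − α for some α ∈ [0,1] and all other coordinates zero is a fixed point of F. -/
theorem stmt15 {n : ℕ} (hn : 3 ≤ n) (C : Matrix (Fin n) (Fin n) ℝ) (hC : IsRIM C)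
    (i j : Fin n) (hij : i ≠ j) (hCij : C i j = 1) (hCji : C j i = 1) :
    (∀ x ∈ simplex n, (∀ v, x ≠ vertex n v) → DF C x = x → x i + x j < 1 →
      x i = (x i + x j) / 2 ∧ x j = (x i + x j) / 2) ∧
    (∀ α ∈ Set.Icc (0 : ℝ) 1,
      (fun k => if k = i then α else if k = j then 1 - α else (0 : ℝ)) ∈ simplex n ∧
      DF C (fun k => if k = i then α else if k = j then 1 - α else 0)
        = fun k => if k = i then α else if k = j then 1 - α else 0) := by
  obtain ⟨hnn, hrow, hdiag⟩ := hC
  have hz : ∀ (r s : Fin n), C r s = 1 → ∀ k, k ≠ s → C r k = 0 := by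
    intro r s h1 k hk
    have h2 := Finset.sum_erase_add Finset.univ (fun m => C r m) (Finset.mem_univ s)
    have he : ∑ m ∈ Finset.univ.erase s, C r m = 0 := by
      have h3 := hrow r
      linarith
    exact (Finset.sum_eq_zero_iff_of_nonneg (fun m _ => hnn r m)).mp he k
      (Finset.mem_erase.mpr ⟨hk, Finset.mem_univ k⟩)
  constructor
  · intro x hx hnv hfix hζ
    obtain ⟨hx0, hx1⟩ := hx
    have hle : ∀ k, x k ≤ 1 := by
      intro k; rw [← hx1]
      exact Finset.single_le_sum (fun m _ => hx0 m) (Finset.mem_univ k)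
    have hq : ∀ m, 0 ≤ x m - x m ^ 2 := by
      intro m; nlinarith [hx0 m, hle m]
    have key : ∀ a b : Fin n, C b a = 1 → x b - x b ^ 2 ≤ x a - x a ^ 2 := by
      intro a b hba
      have hfa : DF C x a = x a := congrFun hfix a
      unfold DF at hfa
      have hsum : C b a * (x b - x b ^ 2) ≤ ∑ m, C m a * (x m - x m ^ 2) :=
        Finset.single_le_sum (f := fun m => C m a * (x m - x m ^ 2))
          (fun m _ => mul_nonneg (hnn m a) (hq m)) (Finset.mem_univ b)
      rw [hba, one_mul] at hsum
      linarith
    have heq : x i - x i ^ 2 = x j - x j ^ 2 :=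
      le_antisymm (key j i hCij) (key i j hCji)
    have h3 : (x i - x j) * (1 - (x i + x j)) = 0 := by linear_combination heq
    have h4 : x i - x j = 0 := by
      rcases mul_eq_zero.mp h3 with h | h
      · exact h
      · linarith
    constructor <;> linarith
  · intro α hα
    obtain ⟨hα0, hα1⟩ := hα
    set x : Fin n → ℝ := fun k => if k = i then α else if k = j then 1 - α else 0 with hxdef
    have hxi : x i = α := by simp [hxdef]
    have hxj : x j = 1 - α := by simp [hxdef, hij.symm]
    have hxo : ∀ k, k ≠ i → k ≠ j → x k = 0 := by
      intro k h1 h2; simp [hxdef, h1, h2]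
    have hmem : x ∈ simplex n := by
      constructor
      · intro k
        by_cases h1 : k = i
        · rw [h1, hxi]; exact hα0
        by_cases h2 : k = j
        · rw [h2, hxj]; linarith
        · rw [hxo k h1 h2]
      · have hsub : ∑ k, x k = ∑ k ∈ ({i, j} : Finset (Fin n)), x k := by
          refine (Finset.sum_subset (Finset.subset_univ _) ?_).symm
          intro k _ hk
          simp only [Finset.mem_insert, Finset.mem_singleton, not_or] at hk
          exact hxo k hk.1 hk.2
        rw [hsub, Finset.sum_pair hij, hxi, hxj]; ring
    refine ⟨hmem, ?_⟩
    funext k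
    show ∑ m, C m k * (x m - x m ^ 2) + x k ^ 2 = x k
    have hxq : ∀ m, x m - x m ^ 2 = if m = i then α - α ^ 2 else if m = j then α - α ^ 2 else 0 := by
      intro m
      by_cases h1 : m = i
      · rw [h1, hxi]; simp
      by_cases h2 : m = j
      · rw [h2, hxj]; simp [h1, hij.symm]; ring
      · rw [hxo m h1 h2]; simp [h1, h2]
    have hs : ∑ m, C m k * (x m - x m ^ 2) = C i k * (α - α ^ 2) + C j k * (α - α ^ 2) := by
      have hsub : ∑ m, C m k * (x m - x m ^ 2)
          = ∑ m ∈ ({i, j} : Finset (Fin n)), C m k * (x m - x m ^ 2) := by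
        refine (Finset.sum_subset (Finset.subset_univ _) ?_).symm
        intro m _ hm
        simp only [Finset.mem_insert, Finset.mem_singleton, not_or] at hm
        rw [hxq m, if_neg hm.1, if_neg hm.2, mul_zero]
      rw [hsub, Finset.sum_pair hij, hxq i, hxq j]
      simp [hij.symm]
    rw [hs]
    by_cases h1 : k = i
    · rw [h1, hxi, hdiag i, hCji]; ring
    by_cases h2 : k = j
    · rw [h2, hxj, hCij, hdiag j]; ring
    · rw [hxo k h1 h2, hz i j hCij k h2, hz j i hCji k h1]; ring
end

section
/- Let m ≥ 3 and let A ∈ ℝ^{m×m} be row-stochastic, irreducible, and zero-diagonal, with dominant left eigenvector c (the unique c in the m-simplex with cᵀA = cᵀ, which has strictly positive entries). Then for every ζ ∈ (0,1) there exists a unique vector x ∈ ℝ^m with 0 < x_i < 1 for all i, ∑_{i=1}^m x_i = ζ, and x_i(1 − x_i) = α c_i for all i for some scalar α > 0; moreover this x satisfies x_i > x_j if and only if c_i > c_j, and x_i = x_j if and only if c_i = c_j. -/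
/-!
Let `k` maximise `c`, which is positive by irreducibility, and let `t ∈ (0, 1)`. An equilibrium
with `x k = t` is forced: every other coordinate lies below `1/2` (two coordinates sum to less
than `1`, and `x(1 - x)` is increasing on such pairs), so it is the smaller root of
`x(1 - x) = (c i / c k) t(1 - t)`. The total weight `F(t)` of this profile is concave, because
`√(1 - 4 r t(1 - t)) = ‖(√(1 - r), √r (1 - 2t))‖` is convex for `0 ≤ r ≤ 1`, and `F(0) = 0`,
`F(1) = 1`. Hence `F` takes each value `ζ ∈ (0, 1)` exactly once on `(0, 1)`.
-/

open Set Matrix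

lemma concaveOn_sum {ι E : Type*} [AddCommGroup E] [Module ℝ E] {s : Set E} {f : ι → E → ℝ}
    (t : Finset ι) (hs : Convex ℝ s) (hf : ∀ i ∈ t, ConcaveOn ℝ s (f i)) :
    ConcaveOn ℝ s fun x => ∑ i ∈ t, f i x := by
  refine ⟨hs, fun x hx y hy a b ha hb hab => ?_⟩
  simp only [smul_eq_mul, Finset.mul_sum, ← Finset.sum_add_distrib]
  exact Finset.sum_le_sum fun i hi => (hf i hi).2 hx hy ha hb hab

lemma ConcaveOn.eq_of_apply_eq_of_apply_lt {s : Set ℝ} {f : ℝ → ℝ} (hf : ConcaveOn ℝ s f)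
    {t₁ t₂ b : ℝ} (h₁ : t₁ ∈ s) (h₂ : t₂ ∈ s) (hb : b ∈ s) (ht₁ : t₁ < b) (ht₂ : t₂ < b)
    (heq : f t₁ = f t₂) (hlt : f t₁ < f b) : t₁ = t₂ := by
  rcases lt_trichotomy t₁ t₂ with h | h | h
  · exact absurd (hf.right_le_of_le_left'' h₁ hb h ht₂.le heq.ge) (by linarith)
  · exact h
  · exact absurd (hf.right_le_of_le_left'' h₂ hb h ht₁.le heq.le) (by linarith)

lemma mul_one_sub_lt_mul_one_sub {a b : ℝ} (hab : a < b) (h : a + b < 1) :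
    a * (1 - a) < b * (1 - b) := by
  nlinarith

section LowerRoot

noncomputable def lowerRoot (p : ℝ) : ℝ := (1 - √(1 - 4 * p)) / 2

lemma lowerRoot_zero : lowerRoot 0 = 0 := by
  simp [lowerRoot]

lemma lowerRoot_le_half (p : ℝ) : lowerRoot p ≤ 1 / 2 := by
  have := Real.sqrt_nonneg (1 - 4 * p)
  unfold lowerRoot
  linarith

lemma lowerRoot_pos {p : ℝ} (hp : 0 < p) : 0 < lowerRoot p := by
  have : √(1 - 4 * p) < 1 := (Real.sqrt_lt' one_pos).2 (by linarith)
  unfold lowerRoot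
  linarith

lemma lowerRoot_mul_one_sub_lowerRoot {p : ℝ} (hp : p ≤ 1 / 4) :
    lowerRoot p * (1 - lowerRoot p) = p := by
  have := Real.sq_sqrt (show 0 ≤ 1 - 4 * p by linarith)
  unfold lowerRoot
  linear_combination -this / 4

lemma lowerRoot_mul_one_sub_self {x : ℝ} (hx : x ≤ 1 / 2) : lowerRoot (x * (1 - x)) = x := by
  rw [lowerRoot, show 1 - 4 * (x * (1 - x)) = (1 - 2 * x) ^ 2 by ring,
    Real.sqrt_sq (by linarith)]
  ring

lemma continuous_lowerRoot : Continuous lowerRoot := by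
  unfold lowerRoot
  fun_prop

open Complex in
lemma convexOn_sqrt_one_sub_four_mul {r : ℝ} (hr₀ : 0 ≤ r) (hr₁ : r ≤ 1) :
    ConvexOn ℝ univ fun t : ℝ => √(1 - 4 * (r * (t * (1 - t)))) := by
  have key : ∀ t : ℝ, √(1 - 4 * (r * (t * (1 - t)))) =
      ‖AffineMap.lineMap (↑√(1 - r) + ↑√r * I : ℂ) (↑√(1 - r) - ↑√r * I) t‖ := by
    intro t
    have hline : AffineMap.lineMap (↑√(1 - r) + ↑√r * I : ℂ) (↑√(1 - r) - ↑√r * I) t =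
        ↑√(1 - r) + ↑(√r * (1 - 2 * t)) * I := by
      rw [AffineMap.lineMap_apply_module', Complex.real_smul]
      push_cast
      ring
    rw [hline, norm_add_mul_I, mul_pow, Real.sq_sqrt (by linarith), Real.sq_sqrt hr₀]
    congr 1
    ring
  simp_rw [key]
  exact (convexOn_norm convex_univ).comp_affineMap _

lemma concaveOn_lowerRoot_mul_mul_one_sub {r : ℝ} (hr₀ : 0 ≤ r) (hr₁ : r ≤ 1) :
    ConcaveOn ℝ univ fun t : ℝ => lowerRoot (r * (t * (1 - t))) := by
  refine ⟨convex_univ, fun x _ y _ a b ha hb hab => ?_⟩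
  have := (convexOn_sqrt_one_sub_four_mul hr₀ hr₁).2 (mem_univ x) (mem_univ y) ha hb hab
  simp only [smul_eq_mul, lowerRoot] at this ⊢
  linarith

end LowerRoot

section Profile

variable {ι : Type*} [DecidableEq ι]

/-- The only candidate equilibrium with `x k = t`, for `r = c / c k` and `k` maximising `c`. -/
noncomputable def profile (r : ι → ℝ) (k : ι) (t : ℝ) (i : ι) : ℝ :=
  if i = k then t else lowerRoot (r i * (t * (1 - t)))

variable {r : ι → ℝ} {k : ι}

@[simp] lemma profile_self (t : ℝ) : profile r k t k = t := if_pos rfl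

lemma profile_of_ne {t : ℝ} {i : ι} (hi : i ≠ k) :
    profile r k t i = lowerRoot (r i * (t * (1 - t))) := if_neg hi

variable [Fintype ι]

lemma continuous_sum_profile : Continuous fun t => ∑ i, profile r k t i := by
  refine continuous_finsetSum _ fun i _ => ?_
  unfold profile
  split_ifs
  · exact continuous_id
  · exact continuous_lowerRoot.comp (by fun_prop)

lemma concaveOn_sum_profile (hr : ∀ i, 0 ≤ r i ∧ r i ≤ 1) :
    ConcaveOn ℝ univ fun t => ∑ i, profile r k t i := by
  refine concaveOn_sum _ convex_univ fun i _ => ?_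
  unfold profile
  split_ifs
  · exact concaveOn_id convex_univ
  · exact concaveOn_lowerRoot_mul_mul_one_sub (hr i).1 (hr i).2

lemma sum_profile_zero : ∑ i, profile r k 0 i = 0 :=
  Finset.sum_eq_zero fun i _ => by simp [profile, lowerRoot_zero]

lemma sum_profile_one : ∑ i, profile r k 1 i = 1 := by
  rw [← Finset.add_sum_erase _ _ (Finset.mem_univ k), profile_self, add_eq_left]
  exact Finset.sum_eq_zero fun i hi => by
    simp [profile_of_ne (Finset.ne_of_mem_erase hi), lowerRoot_zero]

lemma existsUnique_sum_profile_eq (hr : ∀ i, 0 ≤ r i ∧ r i ≤ 1) {ζ : ℝ} (hζ : ζ ∈ Ioo 0 1) :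
    ∃! t : ℝ, t ∈ Ioo 0 1 ∧ ∑ i, profile r k t i = ζ := by
  have hivt := intermediate_value_Ioo zero_le_one
    (continuous_sum_profile (r := r) (k := k)).continuousOn
  rw [sum_profile_zero, sum_profile_one] at hivt
  obtain ⟨t, ht, hsum⟩ := hivt hζ
  refine ⟨t, ⟨ht, hsum⟩, fun s ⟨hs, hsum'⟩ => ?_⟩
  refine (concaveOn_sum_profile hr).eq_of_apply_eq_of_apply_lt (mem_univ s) (mem_univ t)
    (mem_univ 1) hs.2 ht.2 (hsum'.trans hsum.symm) ?_
  rw [hsum', sum_profile_one]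
  exact hζ.2

end Profile

section Equilibrium

variable {ι : Type*} [Fintype ι]

def IsSelfWeightEquilibrium (c : ι → ℝ) (ζ : ℝ) (x : ι → ℝ) : Prop :=
  (∀ i, 0 < x i ∧ x i < 1) ∧ (∑ i, x i) = ζ ∧ ∃ α > (0 : ℝ), ∀ i, x i * (1 - x i) = α * c i

namespace IsSelfWeightEquilibrium

variable {c x : ι → ℝ} {ζ : ℝ}

lemma add_lt_one (hx : IsSelfWeightEquilibrium c ζ x) (hζ : ζ < 1) {i j : ι} (hij : i ≠ j) :
    x i + x j < 1 := by
  classical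
  calc x i + x j = ∑ l ∈ {i, j}, x l := (Finset.sum_pair hij).symm
    _ ≤ ∑ l, x l := Finset.sum_le_sum_of_subset_of_nonneg (Finset.subset_univ _)
        fun l _ _ => (hx.1 l).1.le
    _ < 1 := hx.2.1 ▸ hζ

lemma lt_iff_lt (hx : IsSelfWeightEquilibrium c ζ x) (hζ : ζ < 1) {i j : ι} :
    x j < x i ↔ c j < c i := by
  obtain ⟨α, hα, hxc⟩ := hx.2.2
  have key : ∀ {i j}, x j < x i → c j < c i := fun {i j} h => by
    have hne : j ≠ i := fun hji => h.ne (congrArg x hji)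
    have := mul_one_sub_lt_mul_one_sub h (hx.add_lt_one hζ hne)
    rw [hxc, hxc] at this
    exact lt_of_mul_lt_mul_left this hα.le
  refine ⟨key, fun h => ?_⟩
  rcases lt_trichotomy (x j) (x i) with hlt | heq | hgt
  · exact hlt
  · have := hxc i
    rw [← heq, hxc j] at this
    exact absurd (mul_left_cancel₀ hα.ne' this) h.ne
  · exact absurd (key hgt) h.not_gt

lemma eq_iff_eq (hx : IsSelfWeightEquilibrium c ζ x) (hζ : ζ < 1) {i j : ι} :
    x i = x j ↔ c i = c j := by
  rw [le_antisymm_iff, le_antisymm_iff, ← not_lt, ← not_lt, ← not_lt, ← not_lt,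
    hx.lt_iff_lt hζ, hx.lt_iff_lt hζ]

lemma eq_profile [DecidableEq ι] (hx : IsSelfWeightEquilibrium c ζ x) (hζ : ζ < 1) {k : ι}
    (hk : ∀ i, c i ≤ c k) (hck : 0 < c k) : x = profile (fun i => c i / c k) k (x k) := by
  obtain ⟨α, -, hxc⟩ := hx.2.2
  funext i
  by_cases hik : i = k
  · subst hik; simp
  have hxi : x i ≤ x k := not_lt.1 fun h => (hk i).not_gt ((hx.lt_iff_lt hζ).1 h)
  have hhalf : x i ≤ 1 / 2 := by linarith [hx.add_lt_one hζ hik]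
  rw [profile_of_ne hik, hxc k, ← lowerRoot_mul_one_sub_self hhalf, hxc i]
  congr 1
  field_simp

end IsSelfWeightEquilibrium

lemma isSelfWeightEquilibrium_profile [DecidableEq ι] {c : ι → ℝ} {k : ι} {t ζ : ℝ}
    (hc : ∀ i, 0 < c i) (hk : ∀ i, c i ≤ c k) (ht : t ∈ Ioo 0 1)
    (hsum : ∑ i, profile (fun i => c i / c k) k t i = ζ) :
    IsSelfWeightEquilibrium c ζ (profile (fun i => c i / c k) k t) := by
  have htt : 0 < t * (1 - t) := mul_pos ht.1 (by linarith [ht.2])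
  have hquarter : t * (1 - t) ≤ 1 / 4 := by nlinarith [sq_nonneg (1 - 2 * t)]
  refine ⟨fun i => ?_, hsum, t * (1 - t) / c k, div_pos htt (hc k), fun i => ?_⟩ <;>
    by_cases hik : i = k
  · subst hik; simpa using ht
  · rw [profile_of_ne hik]
    exact ⟨lowerRoot_pos (mul_pos (div_pos (hc i) (hc k)) htt),
      (lowerRoot_le_half _).trans_lt (by norm_num)⟩
  · subst hik; field_simp [(hc i).ne']; simp
  · have hri : c i / c k * (t * (1 - t)) ≤ 1 / 4 :=
      (mul_le_of_le_one_left htt.le ((div_le_one (hc k)).2 (hk i))).trans hquarter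
    rw [profile_of_ne hik, lowerRoot_mul_one_sub_lowerRoot hri]
    ring

end Equilibrium

lemma vecMul_pow_eq_self {ι : Type*} [Fintype ι] [DecidableEq ι] {A : Matrix ι ι ℝ}
    {c : ι → ℝ} (hc : c ᵥ* A = c) (k : ℕ) : c ᵥ* (A ^ k) = c := by
  induction k with
  | zero => simp
  | succ k ih => rw [pow_succ, ← vecMul_vecMul, ih, hc]

lemma pos_of_vecMul_eq_self {ι : Type*} [Fintype ι] [DecidableEq ι] {A : Matrix ι ι ℝ}
    (hA : ∀ i j, 0 ≤ A i j) (hirr : ∀ i j, i ≠ j → ∃ k, 0 < (A ^ k) i j) {c : ι → ℝ}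
    (hc : ∀ i, 0 ≤ c i) (hc₀ : c ≠ 0) (hcA : c ᵥ* A = c) (j : ι) : 0 < c j := by
  obtain ⟨i, hi⟩ := Function.ne_iff.1 hc₀
  have hci : 0 < c i := (hc i).lt_of_ne' hi
  by_cases hij : i = j
  · exact hij ▸ hci
  obtain ⟨k, hk⟩ := hirr i j hij
  calc 0 < c i * (A ^ k) i j := mul_pos hci hk
    _ ≤ ∑ l, c l * (A ^ k) l j := Finset.single_le_sum
        (fun l _ => mul_nonneg (hc l) (pow_apply_nonneg hA k l j)) (Finset.mem_univ i)
    _ = c j := congrFun (vecMul_pow_eq_self hcA k) j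

theorem stmt16_general {m : ℕ} (A : Matrix (Fin m) (Fin m) ℝ)
    (hA1 : ∀ i j, 0 ≤ A i j)
    (hAirr : ∀ i j : Fin m, i ≠ j → ∃ k, 1 ≤ k ∧ 0 < (A ^ k) i j)
    (c : Fin m → ℝ) (hc1 : ∀ i, 0 ≤ c i) (hc2 : ∑ i, c i = 1)
    (hc3 : ∀ j, ∑ i, c i * A i j = c j) :
    ∀ ζ ∈ Set.Ioo (0 : ℝ) 1,
      ∃ x : Fin m → ℝ,
        ((∀ i, 0 < x i ∧ x i < 1) ∧ (∑ i, x i) = ζ ∧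
          ∃ α > (0 : ℝ), ∀ i, x i * (1 - x i) = α * c i) ∧
        (∀ y : Fin m → ℝ,
          ((∀ i, 0 < y i ∧ y i < 1) ∧ (∑ i, y i) = ζ ∧
            ∃ α > (0 : ℝ), ∀ i, y i * (1 - y i) = α * c i) → y = x) ∧
        (∀ i j, (x j < x i ↔ c j < c i) ∧ (x i = x j ↔ c i = c j)) := by
  intro ζ hζ
  have hc : ∀ i, 0 < c i := pos_of_vecMul_eq_self hA1
    (fun i j hij => (hAirr i j hij).imp fun _ hk => hk.2) hc1
    (by rintro rfl; simp at hc2) (funext hc3)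
  obtain ⟨k, -, hk⟩ := Finset.exists_max_image Finset.univ c
    (Finset.nonempty_of_sum_ne_zero (hc2 ▸ one_ne_zero))
  replace hk : ∀ i, c i ≤ c k := fun i => hk i (Finset.mem_univ i)
  have hr : ∀ i, 0 ≤ c i / c k ∧ c i / c k ≤ 1 := fun i =>
    ⟨div_nonneg (hc1 i) (hc k).le, (div_le_one (hc k)).2 (hk i)⟩
  obtain ⟨t, ⟨ht, hsum⟩, ht_unique⟩ := existsUnique_sum_profile_eq (k := k) hr hζ
  have hx := isSelfWeightEquilibrium_profile hc hk ht hsum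
  refine ⟨_, hx, fun y hy => ?_, fun i j => ⟨hx.lt_iff_lt hζ.2, hx.eq_iff_eq hζ.2⟩⟩
  have hy_eq : y = profile (fun i => c i / c k) k (y k) :=
    IsSelfWeightEquilibrium.eq_profile hy hζ.2 hk (hc k)
  rw [hy_eq, ht_unique (y k) ⟨hy.1 k, hy_eq ▸ hy.2.1⟩]

theorem stmt16 {m : ℕ} (hm : 3 ≤ m) (A : Matrix (Fin m) (Fin m) ℝ)
    (hA1 : ∀ i j, 0 ≤ A i j) (hA2 : ∀ i, ∑ j, A i j = 1) (hA3 : ∀ i, A i i = 0)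
    (hAirr : ∀ i j : Fin m, i ≠ j → ∃ k, 1 ≤ k ∧ 0 < (A ^ k) i j)
    (c : Fin m → ℝ) (hc1 : ∀ i, 0 ≤ c i) (hc2 : ∑ i, c i = 1)
    (hc3 : ∀ j, ∑ i, c i * A i j = c j) :
    ∀ ζ ∈ Set.Ioo (0 : ℝ) 1,
      ∃ x : Fin m → ℝ,
        ((∀ i, 0 < x i ∧ x i < 1) ∧ (∑ i, x i) = ζ ∧
          ∃ α > (0 : ℝ), ∀ i, x i * (1 - x i) = α * c i) ∧
        (∀ y : Fin m → ℝ,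
          ((∀ i, 0 < y i ∧ y i < 1) ∧ (∑ i, y i) = ζ ∧
            ∃ α > (0 : ℝ), ∀ i, y i * (1 - y i) = α * c i) → y = x) ∧
        (∀ i j, (x j < x i ↔ c j < c i) ∧ (x i = x j ↔ c i = c j)) :=
  stmt16_general A hA1 hAirr c hc1 hc2 hc3
end

section
/- Let n ≥ 2, let C be a relative interaction matrix, and let S ⊆ {1, …, n} be a sink of G(C) (so C_{ij} = 0 for all i ∈ S, j ∉ S). Define the sink social power ζ_S(t) = ∑_{i ∈ S} x_i(t) along the iterates x(t+1) = F(x(t)) with x(0) ∈ Δⁿ. Then: (a) ζ_S(t+1) ≥ ζ_S(t) for all t ≥ 0 (the sink social power is non-decreasing); and (b) if ζ_S(0) = 0 and x_i(0) = 0 for every node i having a directed path in G(C) to some node of S, then ζ_S(t) = 0 for all t ≥ 0. -/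
/-- The principal submatrix of C indexed by S is irreducible. -/
def SubIrred {n : ℕ} (C : Matrix (Fin n) (Fin n) ℝ) (S : Finset (Fin n)) : Prop :=
  ∀ i j : {a // a ∈ S}, i ≠ j →
    ∃ k, 1 ≤ k ∧
      0 < ((C.submatrix (fun a : {a // a ∈ S} => a.1) (fun a : {a // a ∈ S} => a.1)) ^ k) i j

/-- S is a sink of G(C): closed under outgoing edges, with irreducible principal submatrix. -/
def IsSink {n : ℕ} (C : Matrix (Fin n) (Fin n) ℝ) (S : Finset (Fin n)) : Prop :=
  (∀ i ∈ S, ∀ j ∉ S, C i j = 0) ∧ SubIrred C S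

theorem stmt17 {n : ℕ} (hn : 2 ≤ n) (C : Matrix (Fin n) (Fin n) ℝ) (hC : IsRIM C)
    (S : Finset (Fin n)) (hS : IsSink C S)
    (x : ℕ → Fin n → ℝ) (hx0 : x 0 ∈ simplex n)
    (hrec : ∀ t, x (t + 1) = DF C (x t)) :
    (∀ t, ∑ i ∈ S, x t i ≤ ∑ i ∈ S, x (t + 1) i) ∧
    ((∑ i ∈ S, x 0 i) = 0 →
      (∀ i : Fin n, (∃ k, 1 ≤ k ∧ ∃ j ∈ S, 0 < (C ^ k) i j) → x 0 i = 0) →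
      ∀ t, ∑ i ∈ S, x t i = 0) := by
  obtain ⟨hCnn, hCrow, hCdiag⟩ := hC
  obtain ⟨hSclosed, _⟩ := hS
  -- simplex invariance
  have hsimp : ∀ t, x t ∈ simplex n := by
    intro t
    induction t with
    | zero => exact hx0
    | succ t ih =>
      obtain ⟨hnn, hsum⟩ := ih
      have hle1 : ∀ j, x t j ≤ 1 := by
        intro j
        calc x t j ≤ ∑ i, x t i :=
              Finset.single_le_sum (fun i _ => hnn i) (Finset.mem_univ j)
          _ = 1 := hsum
      have hterm : ∀ j, 0 ≤ x t j - (x t j) ^ 2 := by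
        intro j; nlinarith [hnn j, hle1 j]
      rw [hrec]
      constructor
      · intro i
        have h1 : 0 ≤ ∑ j, C j i * (x t j - (x t j) ^ 2) :=
          Finset.sum_nonneg fun j _ => mul_nonneg (hCnn j i) (hterm j)
        have h2 : 0 ≤ (x t i) ^ 2 := sq_nonneg _
        show 0 ≤ ∑ j, C j i * (x t j - (x t j) ^ 2) + (x t i) ^ 2
        linarith
      · show ∑ i, (∑ j, C j i * (x t j - (x t j) ^ 2) + (x t i) ^ 2) = 1
        rw [Finset.sum_add_distrib, Finset.sum_comm]
        have : ∀ j ∈ Finset.univ, ∑ i, C j i * (x t j - (x t j) ^ 2)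
            = x t j - (x t j) ^ 2 := by
          intro j _
          rw [← Finset.sum_mul, hCrow j, one_mul]
        rw [Finset.sum_congr rfl this, ← Finset.sum_add_distrib]
        simpa using hsum
  have hterm : ∀ t j, 0 ≤ x t j - (x t j) ^ 2 := by
    intro t j
    obtain ⟨hnn, hsum⟩ := hsimp t
    have hle1 : x t j ≤ 1 := by
      calc x t j ≤ ∑ i, x t i :=
            Finset.single_le_sum (fun i _ => hnn i) (Finset.mem_univ j)
        _ = 1 := hsum
    nlinarith [hnn j]
  have hpownn : ∀ k (i j : Fin n), 0 ≤ (C ^ k) i j := by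
    intro k
    induction k with
    | zero =>
      intro i j
      rw [pow_zero]
      by_cases h : i = j <;> simp [Matrix.one_apply, h]
    | succ k ih =>
      intro i j
      rw [pow_succ, Matrix.mul_apply]
      exact Finset.sum_nonneg fun m _ => mul_nonneg (ih i m) (hCnn m j)
  constructor
  · -- monotonicity
    intro t
    rw [hrec]
    show ∑ i ∈ S, x t i ≤ ∑ i ∈ S, (∑ j, C j i * (x t j - (x t j) ^ 2) + (x t i) ^ 2)
    rw [Finset.sum_add_distrib, Finset.sum_comm]
    have hge : ∑ j, ∑ i ∈ S, C j i * (x t j - (x t j) ^ 2)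
        ≥ ∑ j ∈ S, (x t j - (x t j) ^ 2) := by
      have hsub : ∑ j ∈ S, (x t j - (x t j) ^ 2)
          = ∑ j ∈ S, ∑ i ∈ S, C j i * (x t j - (x t j) ^ 2) := by
        apply Finset.sum_congr rfl
        intro j hj
        rw [← Finset.sum_mul]
        have : ∑ i ∈ S, C j i = 1 := by
          rw [Finset.sum_subset (Finset.subset_univ S)
            (fun i _ hi => hSclosed j hj i hi)]
          exact hCrow j
        rw [this, one_mul]
      rw [hsub]
      apply Finset.sum_le_sum_of_subset_of_nonneg (Finset.subset_univ S)
      intro j _ _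
      exact Finset.sum_nonneg fun i _ => mul_nonneg (hCnn j i) (hterm t j)
    have heq : ∑ i ∈ S, x t i
        = ∑ j ∈ S, (x t j - (x t j) ^ 2) + ∑ i ∈ S, (x t i) ^ 2 := by
      rw [← Finset.sum_add_distrib]
      apply Finset.sum_congr rfl
      intro j _; ring
    linarith
  · -- zero sink social power
    intro h0 hpath
    have key : ∀ t i, (i ∈ S ∨ ∃ k, 1 ≤ k ∧ ∃ j ∈ S, 0 < (C ^ k) i j) → x t i = 0 := by
      intro t
      induction t with
      | zero =>
        intro i hi
        rcases hi with hiS | hp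
        · exact (Finset.sum_eq_zero_iff_of_nonneg (fun i _ => hx0.1 i)).mp h0 i hiS
        · exact hpath i hp
      | succ t ih =>
        intro i hi
        have hxi : x t i = 0 := ih i hi
        rw [hrec]
        show ∑ j, C j i * (x t j - (x t j) ^ 2) + (x t i) ^ 2 = 0
        have hsum0 : ∑ j, C j i * (x t j - (x t j) ^ 2) = 0 := by
          apply Finset.sum_eq_zero
          intro j _
          by_cases hcj : C j i = 0
          · rw [hcj, zero_mul]
          · have hCji : 0 < C j i := lt_of_le_of_ne (hCnn j i) (Ne.symm hcj)
            have hPj : j ∈ S ∨ ∃ k, 1 ≤ k ∧ ∃ j' ∈ S, 0 < (C ^ k) j j' := by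
              rcases hi with hiS | ⟨k, hk, j', hj'S, hkpos⟩
              · exact Or.inr ⟨1, le_refl 1, i, hiS, by rw [pow_one]; exact hCji⟩
              · refine Or.inr ⟨k + 1, by omega, j', hj'S, ?_⟩
                rw [pow_succ', Matrix.mul_apply]
                calc (0 : ℝ) < C j i * (C ^ k) i j' := mul_pos hCji hkpos
                  _ ≤ ∑ m, C j m * (C ^ k) m j' :=
                    Finset.single_le_sum
                      (fun m _ => mul_nonneg (hCnn j m) (hpownn k m j'))
                      (Finset.mem_univ i)
            have hxj : x t j = 0 := ih j hPj
            rw [hxj]; ring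
        rw [hsum0, hxi]; ring
    intro t
    exact Finset.sum_eq_zero fun i hi => key t i (Or.inl hi)
end

section
/- Let n ≥ 3 and let C be an irreducible relative interaction matrix that does not have star topology, with dominant left eigenvector c, and let x* be the unique fixed point of F in the interior of Δⁿ. Define the DeGroot–Friedkin map G : Δⁿ \ {e_1, …, e_n} → Δⁿ by G(x)_i = ( c_i/(1 − x_i) ) / ( ∑_{j=1}^n c_j/(1 − x_j) ). Then x* is a fixed point of G, i.e., G(x*) = x* (so the single-timescale model and the original DeGroot–Friedkin model share the same non-autocratic equilibrium). Moreover, social power accumulates at the top of the centrality ranking: for all i, j, if c_i > c_j > 0 then x*_i / c_i > x*_j / c_j. -/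
/-- A nonnegative matrix is irreducible if for all i ≠ j some power has positive (i,j) entry. -/
def Irred {n : ℕ} (C : Matrix (Fin n) (Fin n) ℝ) : Prop :=
  ∀ i j : Fin n, i ≠ j → ∃ k, 1 ≤ k ∧ 0 < (C ^ k) i j

/-- C has star topology: some node i receives weight 1 from every other node. -/
def HasStarTopology {n : ℕ} (C : Matrix (Fin n) (Fin n) ℝ) : Prop :=
  ∃ i : Fin n, ∀ j, j ≠ i → C j i = 1

/-- c is the dominant left eigenvector of C: c ∈ Δⁿ and cᵀ C = cᵀ. -/
def DominantLeftEigenvector {n : ℕ} (C : Matrix (Fin n) (Fin n) ℝ) (c : Fin n → ℝ) : Prop :=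
  c ∈ simplex n ∧ ∀ j, ∑ i, c i * C i j = c j


lemma left_eig_pow {n : ℕ} (C : Matrix (Fin n) (Fin n) ℝ) (v : Fin n → ℝ)
    (hv : ∀ j, ∑ i, v i * C i j = v j) : ∀ k j, ∑ i, v i * (C ^ k) i j = v j := by
  intro k
  induction k with
  | zero => intro j; simp [Matrix.one_apply, Finset.sum_ite_eq]
  | succ k ih =>
    intro j
    have hpw : ∀ i, (C ^ (k + 1)) i j = ∑ m, (C ^ k) i m * C m j := by
      intro i; rw [pow_succ, Matrix.mul_apply]
    calc ∑ i, v i * (C ^ (k + 1)) i j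
        = ∑ i, ∑ m, v i * ((C ^ k) i m * C m j) := by
          simp_rw [hpw, Finset.mul_sum]
      _ = ∑ m, ∑ i, v i * (C ^ k) i m * C m j := by
          rw [Finset.sum_comm]
          exact Finset.sum_congr rfl fun m _ => Finset.sum_congr rfl fun i _ => by ring
      _ = ∑ m, (∑ i, v i * (C ^ k) i m) * C m j := by simp_rw [Finset.sum_mul]
      _ = ∑ m, v m * C m j := by simp_rw [ih]
      _ = v j := hv j

theorem stmt19 {n : ℕ} (hn : 3 ≤ n) (C : Matrix (Fin n) (Fin n) ℝ) (hC : IsRIM C)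
    (hirr : Irred C) (hnostar : ¬ HasStarTopology C)
    (c : Fin n → ℝ) (hc : DominantLeftEigenvector C c)
    (xs : Fin n → ℝ) (hxs : xs ∈ simplex n) (hxspos : ∀ i, 0 < xs i)
    (hxsfix : DF C xs = xs) :
    (∀ i, (c i / (1 - xs i)) / (∑ j, c j / (1 - xs j)) = xs i) ∧
    (∀ i j, c j < c i → 0 < c j → xs j / c j < xs i / c i) := by
  obtain ⟨hCnn, hCrow, hCdiag⟩ := hC
  obtain ⟨⟨hcnn, hcsum⟩, hceig⟩ := hc
  obtain ⟨hxsnn, hxssum⟩ := hxs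
  haveI : NeZero n := ⟨by omega⟩
  -- powers of C are nonnegative
  have hpow : ∀ k, ∀ i j : Fin n, 0 ≤ (C ^ k) i j := by
    intro k
    induction k with
    | zero => intro i j; simp [Matrix.one_apply]; split <;> norm_num
    | succ k ih =>
      intro i j
      rw [pow_succ, Matrix.mul_apply]
      exact Finset.sum_nonneg fun m _ => mul_nonneg (ih i m) (hCnn m j)
  have hceigk := left_eig_pow C c hceig
  -- c is strictly positive
  have hcpos : ∀ i, 0 < c i := by
    intro i
    rcases (hcnn i).lt_or_eq with h | h
    · exact h
    · exfalso
      obtain ⟨j, _, hj⟩ := Finset.exists_ne_zero_of_sum_ne_zero (by rw [hcsum]; norm_num :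
        ∑ i, c i ≠ 0)
      have hji : j ≠ i := by rintro rfl; exact hj h.symm
      obtain ⟨k, -, hk⟩ := hirr j i hji
      have hle : c j * (C ^ k) j i ≤ ∑ m, c m * (C ^ k) m i :=
        Finset.single_le_sum (f := fun m => c m * (C ^ k) m i)
          (fun m _ => mul_nonneg (hcnn m) (hpow k m i)) (Finset.mem_univ j)
      rw [hceigk k i, ← h] at hle
      have : 0 < c j := (hcnn j).lt_of_ne (Ne.symm hj)
      nlinarith
  -- each pair of entries of xs sums to < 1
  have hpair : ∀ i j : Fin n, i ≠ j → xs i + xs j < 1 := by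
    intro i j hij
    have hcard : 0 < (Finset.univ \ {i, j} : Finset (Fin n)).card := by
      rw [Finset.card_sdiff_of_subset (Finset.subset_univ _), Finset.card_univ, Fintype.card_fin]
      have h2 : ({i, j} : Finset (Fin n)).card ≤ 2 :=
        (Finset.card_insert_le _ _).trans (by simp)
      omega
    obtain ⟨k, hk⟩ := Finset.card_pos.mp hcard
    simp only [Finset.mem_sdiff, Finset.mem_insert, Finset.mem_singleton, not_or] at hk
    obtain ⟨-, hki, hkj⟩ := hk
    have hsub : ({i, j, k} : Finset (Fin n)) ⊆ Finset.univ := Finset.subset_univ _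
    have hsum3 : xs i + xs j + xs k ≤ ∑ m, xs m := by
      have := Finset.sum_le_sum_of_subset_of_nonneg hsub (fun m _ _ => hxsnn m)
      rwa [Finset.sum_insert (by simp [hij, Ne.symm hki]),
        Finset.sum_insert (by simp [Ne.symm hkj]), Finset.sum_singleton, ← add_assoc] at this
    rw [hxssum] at hsum3
    have := hxspos k
    linarith
  have hxlt1 : ∀ i, xs i < 1 := by
    intro i
    haveI : Nontrivial (Fin n) := Fin.nontrivial_iff_two_le.mpr (by omega)
    obtain ⟨j, hj⟩ := exists_ne (α := Fin n) i
    have := hpair i j (Ne.symm hj)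
    have := hxspos j
    linarith
  -- y := xs * (1 - xs) is a left eigenvector
  set y : Fin n → ℝ := fun i => xs i * (1 - xs i) with hy
  have hypos : ∀ i, 0 < y i := fun i => mul_pos (hxspos i) (by linarith [hxlt1 i])
  have hyeig : ∀ j, ∑ i, y i * C i j = y j := by
    intro j
    have h := congrFun hxsfix j
    simp only [DF] at h
    have he : ∑ i, y i * C i j = ∑ i, C i j * (xs i - xs i ^ 2) := by
      apply Finset.sum_congr rfl
      intro i _
      simp only [hy]; ring
    simp only [hy]
    rw [he]; nlinarith [h]
  have hyeigk := left_eig_pow C y hyeig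
  -- minimize y/c, get y = t • c
  obtain ⟨i0, -, hi0⟩ := Finset.exists_min_image Finset.univ (fun i => y i / c i)
    Finset.univ_nonempty
  set t := y i0 / c i0 with htdef
  have ht : 0 < t := div_pos (hypos i0) (hcpos i0)
  have hzge : ∀ i, t * c i ≤ y i := by
    intro i
    have h := hi0 i (Finset.mem_univ i)
    rw [le_div_iff₀ (hcpos i)] at h
    linarith
  have heq : ∀ i, y i = t * c i := by
    intro i
    by_contra hne
    have hgt : t * c i < y i := lt_of_le_of_ne (hzge i) (fun h => hne h.symm)
    have hii0 : i ≠ i0 := by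
      rintro rfl
      rw [htdef, div_mul_cancel₀ _ (hcpos i).ne'] at hgt
      exact lt_irrefl _ hgt
    obtain ⟨k, -, hk⟩ := hirr i i0 hii0
    have hle : (y i - t * c i) * (C ^ k) i i0 ≤ ∑ m, (y m - t * c m) * (C ^ k) m i0 :=
      Finset.single_le_sum (f := fun m => (y m - t * c m) * (C ^ k) m i0)
        (fun m _ => mul_nonneg (by linarith [hzge m]) (hpow k m i0)) (Finset.mem_univ i)
    have hz : ∑ m, (y m - t * c m) * (C ^ k) m i0 = 0 := by
      have h1 := hyeigk k i0
      have h2 := hceigk k i0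
      have h3 : ∑ m, (y m - t * c m) * (C ^ k) m i0
          = ∑ m, y m * (C ^ k) m i0 - t * ∑ m, c m * (C ^ k) m i0 := by
        rw [Finset.mul_sum, ← Finset.sum_sub_distrib]
        apply Finset.sum_congr rfl; intro m _; ring
      rw [h3, h1, h2]
      have : y i0 = t * c i0 := by
        rw [htdef, div_mul_cancel₀ _ (hcpos i0).ne']
      linarith
    rw [hz] at hle
    nlinarith
  -- key identity: c i / (1 - xs i) = xs i / t
  have hterm : ∀ i, c i / (1 - xs i) = xs i / t := by
    intro i
    have h1 : (1 : ℝ) - xs i ≠ 0 := by have := hxlt1 i; linarith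
    rw [div_eq_div_iff h1 ht.ne']
    have h2 := heq i
    simp only [hy] at h2
    nlinarith
  have hsumt : (∑ j, c j / (1 - xs j)) = 1 / t := by
    simp_rw [hterm]
    rw [← Finset.sum_div, hxssum]
  constructor
  · intro i
    rw [hterm i, hsumt]
    field_simp
  · intro i j hji hcj
    have hij : i ≠ j := by rintro rfl; exact lt_irrefl _ hji
    have hxij : xs j < xs i := by
      have hs := hpair i j hij
      have h1 := heq i
      have h2 := heq j
      simp only [hy] at h1 h2
      by_contra hle
      push_neg at hle
      nlinarith
    rw [div_lt_div_iff₀ (hcpos j) (hcpos i)]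
    have h1 := heq i
    have h2 := heq j
    simp only [hy] at h1 h2
    nlinarith [mul_pos (hxspos i) (hxspos j), hxspos i, hxspos j, hxlt1 i, hxlt1 j]
end
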